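/- arXiv:2009.08125 — 2 statements merged into one kernel-verified Lean document; each statement's English description precedes it below -/
import Mathlib

section
/- Let 1 ≤ k ≤ n with k < n−k+1, and let J_{k,n} = ⟨ x_i x_{i+1} ⋯ x_{i+k−1} : 1 ≤ i ≤ n−k+1 ⟩ ⊆ k[x_1,…,x_n] be the consecutive k-out-of-n ideal. Then C_i(J_{k,n}) = {i, i+1, …, k} for 1 ≤ i ≤ k, C_i(J_{k,n}) = {i} for k+1 ≤ i ≤ n−k, and C_i(J_{k,n}) = {n−k+1, …, i} for n−k+1 ≤ i ≤ n. -/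
open MvPolynomial

/-- The squarefree monomial with support `s`: `∏_{j ∈ s} x_j`. -/
noncomputable def sfMon (𝕜 : Type) [Field 𝕜] {σ : Type} (s : Finset σ) : MvPolynomial σ 𝕜 :=
  ∏ j ∈ s, X j

/-- The supports of the minimal monomial generating set `G(I)` of a squarefree monomial
ideal `I`: supports `s` of squarefree monomials in `I` no proper (squarefree) divisor of which
lies in `I`. -/
def sqfreeMinGens {𝕜 : Type} [Field 𝕜] {σ : Type} (I : Ideal (MvPolynomial σ 𝕜)) :
    Set (Finset σ) :=
  { s | sfMon 𝕜 s ∈ I ∧ ∀ t : Finset σ, t ⊂ s → sfMon 𝕜 t ∉ I }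

/-- `C_i(I) = ⋂ { supp m : m ∈ G(I), x_i ∣ m }`. -/
def suppC {𝕜 : Type} [Field 𝕜] {σ : Type} (I : Ideal (MvPolynomial σ 𝕜)) (i : σ) : Set σ :=
  ⋂ s ∈ { s | s ∈ sqfreeMinGens I ∧ i ∈ s }, (s : Set σ)


/-!
A squarefree monomial lies in an ideal generated by squarefree monomials iff its support
contains the support of a generator, so when the generating supports form an antichain under
inclusion they are exactly `G(I)`. The windows `{x_i, …, x_{i+k-1}}` do, and the windows through
`x_p` are those with `max 1 (p-k+1) ≤ i ≤ min p (n-k+1)`; their intersection therefore runs from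
`x_{min p (n-k+1)}` to `x_{max k p}`, which specializes to the three cases.
-/

section SquarefreeMonomialIdeal

variable {𝕜 : Type} [Field 𝕜] {σ : Type}

lemma sfMon_eq_monomial [DecidableEq σ] (s : Finset σ) :
    sfMon 𝕜 s = monomial (Multiset.toFinsupp s.val) 1 := by
  rw [← prod_X_pow_eq_monomial, Multiset.toFinsupp_support, Finset.val_toFinset, sfMon]
  refine Finset.prod_congr rfl fun j hj => ?_
  rw [Multiset.toFinsupp_apply, Multiset.count_eq_one_of_mem s.nodup hj, pow_one]

lemma Finset.toFinsupp_val_le_iff [DecidableEq σ] {s t : Finset σ} :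
    Multiset.toFinsupp s.val ≤ Multiset.toFinsupp t.val ↔ s ⊆ t := by
  rw [← Finsupp.coe_orderIsoMultiset_symm, OrderIso.le_iff_le, Finset.val_le_iff]

lemma sfMon_mem_span_sfMon_image_iff {S : Set (Finset σ)} {s : Finset σ} :
    sfMon 𝕜 s ∈ Ideal.span (sfMon 𝕜 '' S) ↔ ∃ t ∈ S, t ⊆ s := by
  classical
  have hS : sfMon 𝕜 '' S =
      (fun d => monomial d (1 : 𝕜)) '' ((Multiset.toFinsupp ∘ Finset.val) '' S) := by
    rw [Set.image_image]; exact Set.image_congr fun t _ => sfMon_eq_monomial t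
  rw [hS, sfMon_eq_monomial, mem_ideal_span_monomial_image, support_monomial, if_neg one_ne_zero]
  simp only [Finset.mem_singleton, forall_eq, Set.exists_mem_image, Function.comp_apply,
    Finset.toFinsupp_val_le_iff]

lemma sqfreeMinGens_span_of_isAntichain {S : Set (Finset σ)} (hS : IsAntichain (· ⊆ ·) S) :
    sqfreeMinGens (Ideal.span (sfMon 𝕜 '' S)) = S := by
  ext s
  simp only [sqfreeMinGens, Set.mem_ofPred_eq, sfMon_mem_span_sfMon_image_iff, not_exists, not_and]
  constructor
  · rintro ⟨⟨t, ht, hts⟩, hmin⟩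
    obtain rfl | hlt := hts.eq_or_ssubset
    · exact ht
    · exact absurd subset_rfl (hmin t hlt t ht)
  · intro hs
    exact ⟨⟨s, hs, subset_rfl⟩, fun t hts u hu hut =>
      hS hu hs (ne_of_ssubset (hut.trans_ssubset hts)) (hut.trans hts.subset)⟩

lemma suppC_span_of_isAntichain {S : Set (Finset σ)} (hS : IsAntichain (· ⊆ ·) S) (i : σ) :
    suppC (Ideal.span (sfMon 𝕜 '' S)) i = ⋂ s ∈ {s | s ∈ S ∧ i ∈ s}, (s : Set σ) := by
  rw [suppC, sqfreeMinGens_span_of_isAntichain hS]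

end SquarefreeMonomialIdeal

section ConsecutiveIdeal

/-- The window `{x_i, …, x_{i+k-1}}`, with `x_j` indexed by `j - 1 : Fin n`. -/
def consecutiveWindow (n k i : ℕ) : Finset (Fin n) :=
  Finset.univ.filter fun t : Fin n => i ≤ t.val + 1 ∧ t.val + 1 < i + k

def consecutiveWindows (n k : ℕ) : Set (Finset (Fin n)) :=
  consecutiveWindow n k '' Set.Icc 1 (n - k + 1)

variable {n k : ℕ}

@[simp]
lemma mem_consecutiveWindow {i : ℕ} {t : Fin n} :
    t ∈ consecutiveWindow n k i ↔ i ≤ t.val + 1 ∧ t.val + 1 < i + k := by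
  simp [consecutiveWindow]

lemma isAntichain_consecutiveWindows (hk : 1 ≤ k) (hkn : k ≤ n) :
    IsAntichain (· ⊆ ·) (consecutiveWindows n k) := by
  rintro _ ⟨i, ⟨hi₁, hi₂⟩, rfl⟩ _ ⟨j, ⟨hj₁, hj₂⟩, rfl⟩ hne hsub
  have hmem (u : Fin n) (hu : i ≤ u.val + 1 ∧ u.val + 1 < i + k) :
      j ≤ u.val + 1 ∧ u.val + 1 < j + k :=
    mem_consecutiveWindow.mp (hsub (mem_consecutiveWindow.mpr hu))
  have hfirst := hmem ⟨i - 1, by omega⟩ (by simp only; omega)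
  have hlast := hmem ⟨i + k - 2, by omega⟩ (by simp only; omega)
  simp only at hfirst hlast
  exact hne (by rw [show i = j by omega])

theorem suppC_span_consecutiveWindows {𝕜 : Type} [Field 𝕜] (hk : 1 ≤ k) (hkn : k ≤ n)
    (t : Fin n) :
    suppC (Ideal.span (sfMon 𝕜 '' consecutiveWindows n k)) t =
      {u | min (t.val + 1) (n - k + 1) ≤ u.val + 1 ∧ u.val + 1 ≤ max k (t.val + 1)} := by
  rw [suppC_span_of_isAntichain (isAntichain_consecutiveWindows hk hkn)]
  ext u
  simp only [consecutiveWindows, Set.mem_iInter, Set.mem_ofPred_eq, Set.mem_image, Set.mem_Icc,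
    Finset.mem_coe, and_imp, forall_exists_index]
  constructor
  · intro h
    have hlo := h _ (min (t.val + 1) (n - k + 1)) (by omega) (by omega) rfl
      (mem_consecutiveWindow.mpr (by omega))
    have hhi := h _ (max 1 (t.val + 2 - k)) (by omega) (by omega) rfl
      (mem_consecutiveWindow.mpr (by omega))
    rw [mem_consecutiveWindow] at hlo hhi
    omega
  · rintro hu _ i hi₁ hi₂ rfl ht
    rw [mem_consecutiveWindow] at ht ⊢
    omega

end ConsecutiveIdeal

/-- Support poset of the consecutive `k`-out-of-`n` ideal
`J_{k,n} = ⟨ x_i ⋯ x_{i+k−1} : 1 ≤ i ≤ n−k+1 ⟩` when `k < n−k+1`. The variable `x_i`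
(`1 ≤ i ≤ n`) is indexed by `i-1 : Fin n`. Then `C_i = {i,…,k}` for `1 ≤ i ≤ k`,
`C_i = {i}` for `k+1 ≤ i ≤ n−k`, and `C_i = {n−k+1,…,i}` for `n−k+1 ≤ i ≤ n`. -/
theorem stmt13 {𝕜 : Type} [Field 𝕜] (n k : ℕ) (hk : 1 ≤ k) (hkn : k ≤ n)
    (hcase : k < n - k + 1)
    (J : Ideal (MvPolynomial (Fin n) 𝕜))
    (hJ : J = Ideal.span { f | ∃ i : ℕ, 1 ≤ i ∧ i ≤ n - k + 1 ∧
      f = sfMon 𝕜 (Finset.univ.filter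
        (fun t : Fin n => i ≤ t.val + 1 ∧ t.val + 1 < i + k)) }) :
    ∀ t : Fin n,
      (t.val + 1 ≤ k →
        suppC J t = { u : Fin n | t.val ≤ u.val ∧ u.val + 1 ≤ k }) ∧
      (k + 1 ≤ t.val + 1 → t.val + 1 ≤ n - k →
        suppC J t = {t}) ∧
      (n - k + 1 ≤ t.val + 1 →
        suppC J t = { u : Fin n | n - k ≤ u.val ∧ u.val ≤ t.val }) := by
  have hJ_windows : J = Ideal.span (sfMon 𝕜 '' consecutiveWindows n k) := by
    rw [hJ, consecutiveWindows, Set.image_image]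
    congr 1
    ext f
    simp [consecutiveWindow, eq_comm, and_assoc]
  intro t
  rw [hJ_windows, suppC_span_consecutiveWindows hk hkn]
  refine ⟨fun h => ?_, fun h₁ h₂ => ?_, fun h => ?_⟩ <;> ext u <;>
    simp only [Set.mem_ofPred_eq, Set.mem_singleton_iff, Fin.ext_iff] <;> omega
end

section
/- Let P be a forest on {1,…,n} in which every non-maximal element has at least two children. Then there exists a series-parallel ideal I ⊆ k[x_1,…,x_n] (up to relabeling of the variables) whose support poset is isomorphic to P; indeed the leaf ideal I_L(P) is such an ideal: it is series-parallel up to relabeling of variables, and C_i(I_L(P)) = { j : j ≤_P i } for every i, so i ↦ C_i(I_L(P)) is an isomorphism from P onto the support poset of I_L(P). -/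
/-!
The minimal generators of `I_L(P)` are the monomials of the down-sets of the leaves. Since every
inner vertex has two children, the leaves above `i` have exactly the elements below `i` in
common, which computes `C_i`.

For series-parallelity induct on `|P|`. If `P` has a least element `r`, then
`I_L(P) = ⟨x_r⟩ ∩ I_L(P ∖ r)`. Otherwise the elements above a root form a connected component
`C ≠ P`, and `I_L(P) = I_L(C) + I_L(P ∖ C)`. Working with ideals up to relabelling of
the variables lets both pieces live on subtypes.
-/

open MvPolynomial

open Classical

/-- A partial order `P` on `α` is a forest if, for every `p`, the set of elements strictly
below `p` is a chain. -/
def IsPForest {α : Type} (P : PartialOrder α) : Prop :=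
  ∀ p q r : α, P.lt q p → P.lt r p → P.le q r ∨ P.le r q

/-- `l` is maximal (a leaf) for the partial order `P`. -/
def PIsMax {α : Type} (P : PartialOrder α) (l : α) : Prop := ∀ q, P.le l q → q = l

/-- `r` is minimal (a root) for the partial order `P`. -/
def PIsMin {α : Type} (P : PartialOrder α) (r : α) : Prop := ∀ q, P.le q r → q = r

/-- `q` is a child of `p`: `q` covers `p` in `P`. -/
def PChild {α : Type} (P : PartialOrder α) (p q : α) : Prop :=
  P.lt p q ∧ ∀ r, P.lt p r → ¬ P.lt r q

/-- The leaf ideal of a forest `P` on `{1,…,n}`: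
`I_L(P) = ⟨ ∏_{j ≤_P l} x_j : l a leaf of P ⟩`. -/
noncomputable def leafIdeal (𝕜 : Type) [Field 𝕜] {n : ℕ} (P : PartialOrder (Fin n)) :
    Ideal (MvPolynomial (Fin n) 𝕜) :=
  Ideal.span { f | ∃ l : Fin n, PIsMax P l ∧
    f = sfMon 𝕜 (Finset.univ.filter (fun j => P.le j l)) }

/-- Series-parallel ideals, defined inductively: `⟨x_1⟩ ⊆ 𝕜[x_1]` is series-parallel, and if
`I₁ ⊆ 𝕜[x_1,…,x_n]` and `I₂ ⊆ 𝕜[x_{n+1},…,x_{n+m}]` are series-parallel then so are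
`I₁' + I₂'` and `I₁' ∩ I₂'` in `𝕜[x_1,…,x_{n+m}]`, where `I₁'`, `I₂'` are the extensions
along the inclusions of polynomial rings (renaming along `Fin.castAdd` and `Fin.natAdd`). -/
inductive IsSeriesParallel (𝕜 : Type) [Field 𝕜] :
    (n : ℕ) → Ideal (MvPolynomial (Fin n) 𝕜) → Prop
  | basic : IsSeriesParallel 𝕜 1 (Ideal.span {MvPolynomial.X 0})
  | sum {n m : ℕ} {I₁ : Ideal (MvPolynomial (Fin n) 𝕜)} {I₂ : Ideal (MvPolynomial (Fin m) 𝕜)} :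
      IsSeriesParallel 𝕜 n I₁ → IsSeriesParallel 𝕜 m I₂ →
      IsSeriesParallel 𝕜 (n + m)
        (Ideal.map (MvPolynomial.rename (Fin.castAdd m)).toRingHom I₁ ⊔
         Ideal.map (MvPolynomial.rename (Fin.natAdd n)).toRingHom I₂)
  | inter {n m : ℕ} {I₁ : Ideal (MvPolynomial (Fin n) 𝕜)} {I₂ : Ideal (MvPolynomial (Fin m) 𝕜)} :
      IsSeriesParallel 𝕜 n I₁ → IsSeriesParallel 𝕜 m I₂ →
      IsSeriesParallel 𝕜 (n + m)
        (Ideal.map (MvPolynomial.rename (Fin.castAdd m)).toRingHom I₁ ⊓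
         Ideal.map (MvPolynomial.rename (Fin.natAdd n)).toRingHom I₂)

section SquarefreeMonomial

variable {𝕜 : Type} [Field 𝕜] {σ : Type}

lemma sfMon_eq_monomial_s17 (s : Finset σ) :
    sfMon 𝕜 s = monomial (∑ j ∈ s, Finsupp.single j 1) 1 := by
  simp only [sfMon, monomial_sum_one, X]

lemma sum_single_one_apply [DecidableEq σ] (s : Finset σ) (j : σ) :
    (∑ i ∈ s, Finsupp.single i 1 : σ →₀ ℕ) j = if j ∈ s then 1 else 0 := by
  simp only [Finsupp.finsetSum_apply, Finsupp.single_apply, Finset.sum_ite_eq']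

lemma sum_single_one_le_iff (s : Finset σ) (d : σ →₀ ℕ) :
    ∑ j ∈ s, Finsupp.single j 1 ≤ d ↔ ∀ j ∈ s, d j ≠ 0 := by
  classical
  simp only [Finsupp.le_def, sum_single_one_apply]
  refine forall_congr' fun j => ?_
  split_ifs <;> simp_all [Nat.one_le_iff_ne_zero]

lemma mem_span_sfMon_iff {T : Set (Finset σ)} {f : MvPolynomial σ 𝕜} :
    f ∈ Ideal.span (sfMon 𝕜 '' T) ↔ ∀ d ∈ f.support, ∃ s ∈ T, ∀ j ∈ s, d j ≠ 0 := by
  have : sfMon 𝕜 '' T =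
      (fun d => monomial d 1) '' ((fun s => ∑ j ∈ s, Finsupp.single j 1) '' T) := by
    rw [Set.image_image]
    exact Set.image_congr fun s _ => sfMon_eq_monomial_s17 s
  simp only [this, mem_ideal_span_monomial_image, Set.mem_image, exists_exists_and_eq_and,
    sum_single_one_le_iff]

lemma sfMon_mem_span_sfMon_iff {T : Set (Finset σ)} {t : Finset σ} :
    sfMon 𝕜 t ∈ Ideal.span (sfMon 𝕜 '' T) ↔ ∃ s ∈ T, s ⊆ t := by
  classical
  rw [mem_span_sfMon_iff, sfMon_eq_monomial_s17, support_monomial, if_neg one_ne_zero]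
  simp [sum_single_one_apply, Finset.subset_iff]

lemma X_eq_sfMon_singleton (r : σ) : (X r : MvPolynomial σ 𝕜) = sfMon 𝕜 {r} := by
  simp [sfMon]

lemma span_X_inf_span_sfMon [DecidableEq σ] (r : σ) (T : Set (Finset σ)) :
    Ideal.span {X r} ⊓ Ideal.span (sfMon 𝕜 '' T) = Ideal.span (sfMon 𝕜 '' (insert r '' T)) := by
  ext f
  rw [X_eq_sfMon_singleton, ← Set.image_singleton, Submodule.mem_inf, mem_span_sfMon_iff,
    mem_span_sfMon_iff, mem_span_sfMon_iff]
  simp only [Set.mem_singleton_iff, exists_eq_left, Finset.mem_singleton, forall_eq,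
    Set.exists_mem_image, Finset.forall_mem_insert]
  constructor
  · rintro ⟨hr, hT⟩ d hd
    obtain ⟨s, hs, hsd⟩ := hT d hd
    exact ⟨s, hs, hr d hd, hsd⟩
  · intro h
    refine ⟨fun d hd => ?_, fun d hd => ?_⟩ <;> obtain ⟨s, hs, hr, hsd⟩ := h d hd
    exacts [hr, ⟨s, hs, hsd⟩]

lemma map_rename_span_sfMon {τ : Type} [DecidableEq τ] {f : σ → τ} (hf : Function.Injective f)
    (T : Set (Finset σ)) :
    Ideal.map (rename (R := 𝕜) f).toRingHom (Ideal.span (sfMon 𝕜 '' T)) =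
      Ideal.span (sfMon 𝕜 '' (Finset.image f '' T)) := by
  rw [Ideal.map_span, Set.image_image, Set.image_image]
  congr 1
  refine Set.image_congr fun s _ => ?_
  simp [sfMon, map_prod, Finset.prod_image hf.injOn]

end SquarefreeMonomial

section Relabel

variable {𝕜 : Type} [Field 𝕜]

lemma map_rename_map_rename {σ τ υ : Type} (f : σ → τ) (g : τ → υ)
    (I : Ideal (MvPolynomial σ 𝕜)) :
    (I.map (rename (R := 𝕜) f).toRingHom).map (rename (R := 𝕜) g).toRingHom =
      I.map (rename (R := 𝕜) (g ∘ f)).toRingHom := by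
  rw [Ideal.map_map]
  exact congrArg (Ideal.map · I) (RingHom.ext fun p => rename_rename f g p)

lemma map_rename_equiv_inf {σ τ : Type} (e : σ ≃ τ) (I J : Ideal (MvPolynomial σ 𝕜)) :
    (I ⊓ J).map (rename (R := 𝕜) e).toRingHom =
      I.map (rename (R := 𝕜) e).toRingHom ⊓ J.map (rename (R := 𝕜) e).toRingHom := by
  have : (rename (R := 𝕜) e).toRingHom = ((renameEquiv 𝕜 e).toRingEquiv : _ →+* _) := rfl
  simp only [this, Ideal.map_comap_of_equiv, Ideal.comap_inf]

variable (𝕜) in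
def IsSeriesParallelUpToRelabel {σ : Type} (I : Ideal (MvPolynomial σ 𝕜)) : Prop :=
  ∃ (n : ℕ) (e : σ ≃ Fin n), IsSeriesParallel 𝕜 n (I.map (rename (R := 𝕜) e).toRingHom)

namespace IsSeriesParallelUpToRelabel

variable {σ τ : Type}

lemma span_X_of_subsingleton [Subsingleton σ] (r : σ) :
    IsSeriesParallelUpToRelabel 𝕜 (Ideal.span {(X r : MvPolynomial σ 𝕜)}) := by
  have : Unique σ := uniqueOfSubsingleton r
  refine ⟨1, Equiv.ofUnique σ (Fin 1), ?_⟩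
  rw [Ideal.map_span, Set.image_singleton]
  simpa using IsSeriesParallel.basic

lemma map_rename_equiv {I : Ideal (MvPolynomial σ 𝕜)} (h : IsSeriesParallelUpToRelabel 𝕜 I)
    (e : σ ≃ τ) : IsSeriesParallelUpToRelabel 𝕜 (I.map (rename (R := 𝕜) e).toRingHom) := by
  obtain ⟨n, e', h⟩ := h
  refine ⟨n, e.symm.trans e', ?_⟩
  rwa [map_rename_map_rename, Equiv.coe_trans, Function.comp_assoc, e.symm_comp_self,
    Function.comp_id]

lemma sum {I₁ : Ideal (MvPolynomial σ 𝕜)} {I₂ : Ideal (MvPolynomial τ 𝕜)}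
    (h₁ : IsSeriesParallelUpToRelabel 𝕜 I₁) (h₂ : IsSeriesParallelUpToRelabel 𝕜 I₂) :
    IsSeriesParallelUpToRelabel 𝕜
      (I₁.map (rename (R := 𝕜) Sum.inl).toRingHom ⊔ I₂.map (rename (R := 𝕜) Sum.inr).toRingHom) := by
  obtain ⟨n, e₁, h₁⟩ := h₁
  obtain ⟨m, e₂, h₂⟩ := h₂
  refine ⟨n + m, (e₁.sumCongr e₂).trans finSumFinEquiv, ?_⟩
  rw [Ideal.map_sup, map_rename_map_rename, map_rename_map_rename]
  convert h₁.sum h₂ using 2 <;> rw [map_rename_map_rename] <;> rfl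

lemma inf {I₁ : Ideal (MvPolynomial σ 𝕜)} {I₂ : Ideal (MvPolynomial τ 𝕜)}
    (h₁ : IsSeriesParallelUpToRelabel 𝕜 I₁) (h₂ : IsSeriesParallelUpToRelabel 𝕜 I₂) :
    IsSeriesParallelUpToRelabel 𝕜
      (I₁.map (rename (R := 𝕜) Sum.inl).toRingHom ⊓ I₂.map (rename (R := 𝕜) Sum.inr).toRingHom) := by
  obtain ⟨n, e₁, h₁⟩ := h₁
  obtain ⟨m, e₂, h₂⟩ := h₂
  refine ⟨n + m, (e₁.sumCongr e₂).trans finSumFinEquiv, ?_⟩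
  rw [map_rename_equiv_inf, map_rename_map_rename, map_rename_map_rename]
  convert h₁.inter h₂ using 2 <;> rw [map_rename_map_rename] <;> rfl

lemma sup_subtype {α : Type} (p : α → Prop) [DecidablePred p]
    {I₁ : Ideal (MvPolynomial {a // p a} 𝕜)} {I₂ : Ideal (MvPolynomial {a // ¬ p a} 𝕜)}
    (h₁ : IsSeriesParallelUpToRelabel 𝕜 I₁) (h₂ : IsSeriesParallelUpToRelabel 𝕜 I₂) :
    IsSeriesParallelUpToRelabel 𝕜 (I₁.map (rename (R := 𝕜) Subtype.val).toRingHom ⊔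
      I₂.map (rename (R := 𝕜) Subtype.val).toRingHom) := by
  have := (h₁.sum h₂).map_rename_equiv (Equiv.sumCompl p)
  rwa [Ideal.map_sup, map_rename_map_rename, map_rename_map_rename] at this

lemma inf_subtype {α : Type} (p : α → Prop) [DecidablePred p]
    {I₁ : Ideal (MvPolynomial {a // p a} 𝕜)} {I₂ : Ideal (MvPolynomial {a // ¬ p a} 𝕜)}
    (h₁ : IsSeriesParallelUpToRelabel 𝕜 I₁) (h₂ : IsSeriesParallelUpToRelabel 𝕜 I₂) :
    IsSeriesParallelUpToRelabel 𝕜 (I₁.map (rename (R := 𝕜) Subtype.val).toRingHom ⊓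
      I₂.map (rename (R := 𝕜) Subtype.val).toRingHom) := by
  have := (h₁.inf h₂).map_rename_equiv (Equiv.sumCompl p)
  rwa [map_rename_equiv_inf, map_rename_map_rename, map_rename_map_rename] at this

lemma exists_perm {n : ℕ} {I : Ideal (MvPolynomial (Fin n) 𝕜)} (h : IsSeriesParallelUpToRelabel 𝕜 I) :
    ∃ π : Equiv.Perm (Fin n), IsSeriesParallel 𝕜 n (I.map (rename (R := 𝕜) π).toRingHom) := by
  obtain ⟨m, e, h⟩ := h
  obtain rfl : n = m := Fin.equiv_iff_eq.1 ⟨e⟩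
  exact ⟨e, h⟩

end IsSeriesParallelUpToRelabel

end Relabel

section Forest

variable {α : Type} [PartialOrder α]

lemma pIsMax_iff_isMax (l : α) : PIsMax ‹PartialOrder α› l ↔ IsMax l :=
  ⟨fun h _ hb => (h _ hb).le, fun h _ hq => le_antisymm (h hq) hq⟩

lemma IsPForest.le_total_of_le (hf : IsPForest ‹PartialOrder α›) {a b c : α} (ha : a ≤ c)
    (hb : b ≤ c) : a ≤ b ∨ b ≤ a := by
  rcases ha.eq_or_lt with rfl | ha
  · exact .inr hb
  rcases hb.eq_or_lt with rfl | hb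
  · exact .inl ha.le
  exact hf c a b ha hb

lemma IsPForest.subtype (hf : IsPForest ‹PartialOrder α›) (p : α → Prop) :
    IsPForest (inferInstance : PartialOrder {a // p a}) :=
  fun _ _ _ hq hr => hf _ _ _ hq hr

/-- In a forest the elements above a root form a connected component. -/
lemma IsPForest.le_of_le_of_isMin (hf : IsPForest ‹PartialOrder α›) {r u v : α} (hr : IsMin r)
    (huv : u ≤ v) (hrv : r ≤ v) : r ≤ u :=
  (hf.le_total_of_le huv hrv).elim (fun hur => hr hur) id

lemma isMax_subtype_iff {p : α → Prop} (hup : ∀ a b, a ≤ b → p a → p b) (l : {a // p a}) :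
    IsMax l ↔ IsMax (l : α) :=
  ⟨fun h b hb => h (b := ⟨b, hup _ _ hb l.2⟩) hb, fun h b hb => h (b := (b : α)) hb⟩

lemma exists_isMax_ge [Finite α] (a : α) : ∃ l, IsMax l ∧ a ≤ l := by
  obtain ⟨l, hal, hl⟩ := Finite.exists_le_maximal (p := fun _ => True) trivial (a := a)
  exact ⟨l, maximal_true.1 hl, hal⟩

lemma IsPForest.le_of_forall_isMax [Finite α] (hf : IsPForest ‹PartialOrder α›)
    (hbranch : ∀ p : α, ¬ IsMax p → ∃ q q', q ≠ q' ∧ p ⋖ q ∧ p ⋖ q') {i j : α}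
    (h : ∀ l, IsMax l → i ≤ l → j ≤ l) : j ≤ i := by
  by_contra hji
  obtain ⟨l₀, hl₀, hil₀⟩ := exists_isMax_ge i
  have hij : i < j := lt_of_le_of_ne
    ((hf.le_total_of_le hil₀ (h l₀ hl₀ hil₀)).resolve_right hji) (by rintro rfl; exact hji le_rfl)
  obtain ⟨m, him, hmj⟩ := exists_covBy_le_of_lt hij
  obtain ⟨q, q', hqq', hq, hq'⟩ := hbranch i fun hmax => hij.not_ge (hmax hij.le)
  -- a child `c ≠ m` of `i` has a leaf above it which, lying above `i`, also lies above `m`;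
  -- so `c` and `m` are comparable covers of `i`
  obtain ⟨c, hic, hcm⟩ : ∃ c, i ⋖ c ∧ c ≠ m := by
    by_cases hqm : q = m
    · exact ⟨q', hq', hqm ▸ hqq'.symm⟩
    · exact ⟨q, hq, hqm⟩
  obtain ⟨l, hl, hcl⟩ := exists_isMax_ge c
  have hml : m ≤ l := hmj.trans (h l hl (hic.le.trans hcl))
  rcases hf.le_total_of_le hml hcl with hmc | hcm'
  · exact hcm ((hic.eq_or_eq him.le hmc).resolve_left him.ne').symm
  · exact hcm ((him.eq_or_eq hic.le hcm').resolve_left hic.ne')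

end Forest

section LeafIdeal

variable (𝕜 : Type) [Field 𝕜] (α : Type) [PartialOrder α] [Finite α]

def leafSupports : Set (Finset α) :=
  (fun l => (Set.Iic l).toFinite.toFinset) '' {l | IsMax l}

/-- `I_L` of a finite poset given by an instance, so that subtypes inherit the order. -/
noncomputable def leafIdealOf : Ideal (MvPolynomial α 𝕜) :=
  Ideal.span (sfMon 𝕜 '' leafSupports α)

lemma leafIdeal_eq_leafIdealOf {n : ℕ} (P : PartialOrder (Fin n)) :
    leafIdeal 𝕜 P = @leafIdealOf 𝕜 _ (Fin n) P _ := by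
  simp only [leafIdeal, leafIdealOf, leafSupports, Set.image_image, pIsMax_iff_isMax]
  congr 1
  ext f
  simp only [Set.mem_ofPred_eq, Set.mem_image, eq_comm (a := f)]
  refine exists_congr fun l => and_congr_right fun _ => Eq.congr_left (congrArg _ ?_)
  ext j
  simp

variable {𝕜 α}

lemma sfMon_mem_leafIdealOf_iff {t : Finset α} :
    sfMon 𝕜 t ∈ leafIdealOf 𝕜 α ↔ ∃ l, IsMax l ∧ (Set.Iic l).toFinite.toFinset ⊆ t := by
  simp [leafIdealOf, leafSupports, sfMon_mem_span_sfMon_iff]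

lemma sqfreeMinGens_leafIdealOf : sqfreeMinGens (leafIdealOf 𝕜 α) = leafSupports α := by
  ext s
  simp only [sqfreeMinGens, Set.mem_ofPred_eq, sfMon_mem_leafIdealOf_iff]
  constructor
  · rintro ⟨⟨l, hl, hls⟩, hmin⟩
    refine ⟨l, hl, hls.eq_of_not_ssubset fun hlt => hmin _ hlt ⟨l, hl, subset_rfl⟩⟩
  · rintro ⟨l, hl, rfl⟩
    refine ⟨⟨l, hl, subset_rfl⟩, fun t ht ⟨l', hl', hl't⟩ => ht.not_subset fun j hj => ?_⟩
    have hl'l : l' ≤ l := by simpa using ht.subset (hl't (by simp : l' ∈ _))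
    obtain rfl := le_antisymm hl'l (hl' hl'l)
    exact hl't hj

lemma suppC_leafIdealOf (hf : IsPForest ‹PartialOrder α›)
    (hbranch : ∀ p : α, ¬ IsMax p → ∃ q q', q ≠ q' ∧ p ⋖ q ∧ p ⋖ q') (i : α) :
    suppC (leafIdealOf 𝕜 α) i = Set.Iic i := by
  ext j
  simp only [suppC, sqfreeMinGens_leafIdealOf, leafSupports, Set.mem_iInter, Set.mem_ofPred_eq,
    Set.mem_image, Set.mem_Iic, and_imp, forall_exists_index]
  constructor
  · intro h
    exact hf.le_of_forall_isMax hbranch fun l hl hil =>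
      by simpa using h _ l hl rfl (by simpa using hil)
  · rintro hji _ l hl rfl hi
    simpa using hji.trans (by simpa using hi)

end LeafIdeal

section Decomposition

variable {𝕜 : Type} [Field 𝕜] {α : Type} [PartialOrder α] [Finite α]

lemma image_val_leafSupports {p : α → Prop} (hup : ∀ a b, a ≤ b → p a → p b) :
    Finset.image Subtype.val '' leafSupports {a // p a} =
      (fun l => {a | p a ∧ a ≤ l}.toFinite.toFinset) '' {l | IsMax l ∧ p l} := by
  have hIic (l : {a // p a}) : (Set.Iic l).toFinite.toFinset.image Subtype.val =
      {a | p a ∧ a ≤ (l : α)}.toFinite.toFinset := by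
    ext a
    simp [← Subtype.coe_le_coe, and_comm]
  ext s
  simp only [leafSupports, Set.image_image, Set.mem_image, Set.mem_ofPred_eq, hIic]
  constructor
  · rintro ⟨l, hl, rfl⟩
    exact ⟨l, ⟨(isMax_subtype_iff hup l).1 hl, l.2⟩, rfl⟩
  · rintro ⟨l, ⟨hl, hpl⟩, rfl⟩
    exact ⟨⟨l, hpl⟩, (isMax_subtype_iff hup _).2 hl, rfl⟩

lemma leafSupports_eq_union {p : α → Prop} (hp : ∀ a b, a ≤ b → (p a ↔ p b)) :
    leafSupports α = Finset.image Subtype.val '' leafSupports {a // p a} ∪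
      Finset.image Subtype.val '' leafSupports {a // ¬ p a} := by
  have himage (q : α → Prop) (hq : ∀ a b, a ≤ b → (q a ↔ q b)) :
      Finset.image Subtype.val '' leafSupports {a // q a} =
        (fun l => (Set.Iic l).toFinite.toFinset) '' {l | IsMax l ∧ q l} := by
    rw [image_val_leafSupports fun a b hab => (hq a b hab).1]
    refine Set.image_congr fun l hl => ?_
    ext a
    simpa using fun hal => (hq a l hal).2 hl.2
  rw [himage p hp, himage (¬ p ·) fun a b hab => not_congr (hp a b hab), ← Set.image_union,
    ← Set.ofPred_or, leafSupports]
  simp only [← and_or_left, Classical.em, and_true]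

lemma leafSupports_eq_image_insert {r : α} (hr : ∀ a, r ≤ a) (hr' : ¬ IsMax r) :
    leafSupports α =
      insert r '' (Finset.image Subtype.val '' leafSupports {a // ¬ a = r}) := by
  have hup (a b : α) (hab : a ≤ b) (har : ¬ a = r) : ¬ b = r := by
    rintro rfl
    exact har (le_antisymm hab (hr a))
  have hleaves : {l | IsMax l ∧ ¬ l = r} = {l | IsMax l} :=
    Set.ext fun l => and_iff_left_of_imp fun hl hlr => hr' (hlr ▸ hl)
  rw [image_val_leafSupports hup, hleaves, Set.image_image, leafSupports]
  refine Set.image_congr fun l _ => ?_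
  ext a
  by_cases har : a = r <;> simp [har, hr]

lemma leafIdealOf_eq_sup {p : α → Prop} (hp : ∀ a b, a ≤ b → (p a ↔ p b)) :
    leafIdealOf 𝕜 α =
      (leafIdealOf 𝕜 {a // p a}).map (rename (R := 𝕜) Subtype.val).toRingHom ⊔
      (leafIdealOf 𝕜 {a // ¬ p a}).map (rename (R := 𝕜) Subtype.val).toRingHom := by
  rw [leafIdealOf, leafIdealOf, leafIdealOf, map_rename_span_sfMon Subtype.val_injective,
    map_rename_span_sfMon Subtype.val_injective, ← Ideal.span_union, ← Set.image_union,
    leafSupports_eq_union hp]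

lemma leafIdealOf_eq_inf {r : α} (hr : ∀ a, r ≤ a) (hr' : ¬ IsMax r) :
    leafIdealOf 𝕜 α =
      (Ideal.span {X (⟨r, rfl⟩ : {a // a = r})}).map (rename (R := 𝕜) Subtype.val).toRingHom ⊓
      (leafIdealOf 𝕜 {a // ¬ a = r}).map (rename (R := 𝕜) Subtype.val).toRingHom := by
  have hX : (Ideal.span {X (⟨r, rfl⟩ : {a // a = r})}).map
      (rename (R := 𝕜) Subtype.val).toRingHom = Ideal.span {X r} := by
    rw [Ideal.map_span, Set.image_singleton]
    exact congrArg _ (congrArg _ (rename_X _ _))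
  rw [hX, leafIdealOf, leafIdealOf, map_rename_span_sfMon Subtype.val_injective,
    span_X_inf_span_sfMon, leafSupports_eq_image_insert hr hr']

lemma leafIdealOf_eq_span_X {r : α} (hr : ∀ a, a = r) : leafIdealOf 𝕜 α = Ideal.span {X r} := by
  have : leafSupports α = {{r}} := by
    have hmax : IsMax r := fun b _ => (hr b).le
    refine Set.eq_singleton_iff_unique_mem.2 ⟨⟨r, hmax, ?_⟩, ?_⟩
    · ext a
      simp [hr a]
    · rintro s ⟨l, -, rfl⟩
      ext a
      simp [hr a, hr l]
  rw [leafIdealOf, this, Set.image_singleton, X_eq_sfMon_singleton]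

end Decomposition

theorem isSeriesParallelUpToRelabel_leafIdealOf (𝕜 : Type) [Field 𝕜] (α : Type)
    [PartialOrder α] [Finite α] [Nonempty α] (hf : IsPForest ‹PartialOrder α›) :
    IsSeriesParallelUpToRelabel 𝕜 (leafIdealOf 𝕜 α) := by
  obtain ⟨n, hn⟩ : ∃ n, Nat.card α = n := ⟨_, rfl⟩
  induction n using Nat.strong_induction_on generalizing α with
  | _ n ih =>
  have ih' (p : α → Prop) {x : α} (hx : ¬ p x) [Nonempty {a // p a}] :
      IsSeriesParallelUpToRelabel 𝕜 (leafIdealOf 𝕜 {a // p a}) :=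
    ih _ (hn ▸ Finite.card_subtype_lt hx) _ (hf.subtype p) rfl
  obtain ⟨r, -, hr⟩ := Finite.exists_le_minimal (p := fun _ => True) trivial
    (a := Classical.arbitrary α)
  replace hr : IsMin r := minimal_true.1 hr
  by_cases hall : ∀ a, r ≤ a
  · by_cases hrmax : IsMax r
    · have hr' (a : α) : a = r := le_antisymm (hrmax (hall a)) (hall a)
      have : Subsingleton α := ⟨fun a b => (hr' a).trans (hr' b).symm⟩
      rw [leafIdealOf_eq_span_X hr']
      exact .span_X_of_subsingleton r
    · obtain ⟨b, hrb⟩ := not_isMax_iff.1 hrmax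
      have : Nonempty {a // ¬ a = r} := ⟨⟨b, hrb.ne'⟩⟩
      have : Subsingleton {a // a = r} := ⟨fun a b => Subtype.ext (a.2.trans b.2.symm)⟩
      rw [leafIdealOf_eq_inf hall hrmax]
      exact .inf_subtype _ (.span_X_of_subsingleton _) (ih' _ (not_not_intro rfl))
  · obtain ⟨x, hx⟩ := not_forall.1 hall
    have : Nonempty {a // r ≤ a} := ⟨⟨r, le_rfl⟩⟩
    have : Nonempty {a // ¬ r ≤ a} := ⟨⟨x, hx⟩⟩
    rw [leafIdealOf_eq_sup fun a b hab => ⟨fun h => h.trans hab, hf.le_of_le_of_isMin hr hab⟩]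
    exact .sup_subtype _ (ih' _ hx) (ih' _ (not_not_intro le_rfl))

/-- Proposition 4.5: let `P` be a (nonempty) forest on `{1,…,n}` in which every non-maximal
element has at least two children. Then the leaf ideal `I_L(P)` is series-parallel up to
relabeling of the variables, and `C_i(I_L(P)) = { j : j ≤_P i }` for every `i`, so
`i ↦ C_i(I_L(P))` is an isomorphism from `P` onto the support poset of `I_L(P)`
(ordered by inclusion); in particular there is a series-parallel ideal (up to relabeling)
whose support poset is isomorphic to `P`. -/
theorem stmt17 {𝕜 : Type} [Field 𝕜] (n : ℕ) (hn : 1 ≤ n) (P : PartialOrder (Fin n))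
    (hforest : IsPForest P)
    (hchildren : ∀ p : Fin n, ¬ PIsMax P p →
      ∃ q q' : Fin n, q ≠ q' ∧ PChild P p q ∧ PChild P p q') :
    (∃ π : Equiv.Perm (Fin n),
      IsSeriesParallel 𝕜 n
        (Ideal.map (MvPolynomial.rename (π : Fin n → Fin n)).toRingHom (leafIdeal 𝕜 P))) ∧
    (∀ i : Fin n, suppC (leafIdeal 𝕜 P) i = { j : Fin n | P.le j i }) ∧
    Function.Injective (fun i => suppC (leafIdeal 𝕜 P) i) ∧
    (∀ i i' : Fin n, suppC (leafIdeal 𝕜 P) i ⊆ suppC (leafIdeal 𝕜 P) i' ↔ P.le i i') := by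
  let _ : PartialOrder (Fin n) := P
  have : Nonempty (Fin n) := ⟨⟨0, hn⟩⟩
  have hsupp (i : Fin n) : suppC (leafIdeal 𝕜 P) i = Set.Iic i := by
    rw [leafIdeal_eq_leafIdealOf]
    exact suppC_leafIdealOf hforest (fun p hp => hchildren p ((pIsMax_iff_isMax p).not.2 hp)) i
  refine ⟨?_, hsupp, fun i i' h => ?_, fun i i' => ?_⟩
  · rw [leafIdeal_eq_leafIdealOf]
    exact (isSeriesParallelUpToRelabel_leafIdealOf 𝕜 (Fin n) hforest).exists_perm
  · simpa only [hsupp, Set.Iic_inj] using h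
  · rw [hsupp, hsupp, Set.Iic_subset_Iic]
end
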